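/- arXiv:1301.1568 — 4 statements merged into one kernel-verified Lean document; each statement's English description precedes it below -/
import Mathlib

section
/- Let S be a constant rich subsemigroup of P(X), let α ∈ S with α ≠ 0, and let φ ∈ S¹ (that is, φ ∈ S or φ = id_X). Then φ ∈ 𝔓¹(α) if and only if im(α) ⊆ dom(φ). -/
/-!
Partial transformation monoid `P(X)`, modelled as `X → Option X` with
left-to-right composition, and Lemma 3.5(1): in a constant rich subsemigroup `S`
of `P(X)`, for `α ∈ S` with `α ≠ 0` and `φ ∈ S¹`, one has
`φ ∈ 𝔓¹(α) ↔ im(α) ⊆ dom(φ)`.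
-/

namespace ConjPaper

open Classical

/-- Partial transformations of `X`. -/
abbrev PT (X : Type*) := X → Option X

variable {X : Type*}

/-- Left-to-right composition: `x(αφ) = (xα)φ`. -/
def pcomp (α φ : PT X) : PT X := fun x => (α x).bind φ

/-- The zero of `P(X)`: the empty transformation. -/
def pzero : PT X := fun _ => none

/-- The identity of `P(X)`. -/
def pid : PT X := fun x => some x

/-- The domain of a partial transformation. -/
def pdom (α : PT X) : Set X := {x | α x ≠ none}

/-- The image of a partial transformation. -/
def pim (α : PT X) : Set X := {y | ∃ x, α x = some y}

/-- `S ⊆ P(X)` is a subsemigroup if it is closed under composition. -/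
def IsSubsemigroupPT (S : Set (PT X)) : Prop := ∀ α ∈ S, ∀ β ∈ S, pcomp α β ∈ S

/-- `S` is constant rich if for every `x ∈ X` there is `α ∈ S` with `im(α) = {x}`. -/
def ConstRich (S : Set (PT X)) : Prop := ∀ x : X, ∃ α ∈ S, pim α = {x}

/-- The left principal ideal `S¹α = {α} ∪ Sα`. -/
def leftIdeal (S : Set (PT X)) (α : PT X) : Set (PT X) :=
  {β | β = α ∨ ∃ μ ∈ S, β = pcomp μ α}

/-- `𝔓¹(α)`: for `α ≠ 0`, the set `𝔓(α) ∪ {1}` where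
`𝔓(α) = {g ∈ S : (μα)g ≠ 0 for every μα ∈ S¹α with μα ≠ 0}`; and `𝔓¹(0) = {0} ∪ {1}`.
(When `S` has no zero, i.e. `pzero ∉ S`, this set provably equals `S¹ = S ∪ {1}`.) -/
noncomputable def Pfrak1 (S : Set (PT X)) (α : PT X) : Set (PT X) :=
  (if α = pzero then {pzero}
   else {g ∈ S | ∀ β ∈ leftIdeal S α, β ≠ pzero → pcomp β g ≠ pzero}) ∪ {pid}

/-- Lemma 3.5(1). Let `S` be a constant rich subsemigroup of `P(X)`,
`α ∈ S` with `α ≠ 0`, and `φ ∈ S¹` (that is, `φ ∈ S` or `φ = id_X`).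
Then `φ ∈ 𝔓¹(α)` iff `im(α) ⊆ dom(φ)`. -/
theorem mem_Pfrak1_iff_im_subset_dom [Nonempty X] (S : Set (PT X))
    (hS : IsSubsemigroupPT S) (hCR : ConstRich S)
    (α : PT X) (hαS : α ∈ S) (hα0 : α ≠ pzero)
    (φ : PT X) (hφ : φ ∈ S ∨ φ = pid) :
    φ ∈ Pfrak1 S α ↔ pim α ⊆ pdom φ := by
  unfold Pfrak1
  rw [if_neg hα0]
  constructor
  · rintro (⟨hφS, hprop⟩ | hφid)
    · intro y hy
      obtain ⟨x, hx⟩ := hy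
      by_contra hdom
      simp only [pdom, Set.mem_setOf_eq, not_not] at hdom
      obtain ⟨μ, hμS, hμim⟩ := hCR x
      have hxmem : x ∈ pim μ := by rw [hμim]; rfl
      obtain ⟨z, hz⟩ := hxmem
      have hβ : pcomp μ α ∈ leftIdeal S α := Or.inr ⟨μ, hμS, rfl⟩
      have hβ0 : pcomp μ α ≠ pzero := by
        intro h
        have := congrFun h z
        simp [pcomp, pzero, hz, hx] at this
      apply hprop _ hβ hβ0
      funext w
      simp only [pcomp, pzero]
      cases hμw : μ w with
      | none => rfl
      | some u =>
        have : u ∈ pim μ := ⟨w, hμw⟩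
        rw [hμim] at this
        cases this
        simp [hx, hdom]
    · intro y _
      rw [Set.mem_singleton_iff] at hφid
      simp [hφid, pdom, pid]
  · intro hsub
    rcases hφ with hφS | hφid
    · left
      refine ⟨hφS, ?_⟩
      rintro β hβ hβ0 hcon
      apply hβ0
      funext w
      have hw := congrFun hcon w
      simp only [pcomp, pzero] at hw ⊢
      cases hβw : β w with
      | none => rfl
      | some y =>
        exfalso
        have hyim : y ∈ pim α := by
          rcases hβ with rfl | ⟨μ, hμS, rfl⟩
          · exact ⟨w, hβw⟩
          · simp only [pcomp] at hβw
            cases hμw : μ w with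
            | none => simp [hμw] at hβw
            | some u => exact ⟨u, by simpa [hμw] using hβw⟩
        have := hsub hyim
        simp only [pdom, Set.mem_setOf_eq] at this
        rw [hβw] at hw
        exact this hw
    · right; exact hφid

end ConjPaper
end

section
/- Let S be a constant rich subsemigroup of P(X), let α, β ∈ S with α ≠ 0, and let φ ∈ S¹ (that is, φ ∈ S or φ = id_X). Then αφ = φβ with φ ∈ 𝔓¹(α) if and only if φ is an rp-homomorphism from Γ(α) to Γ(β). -/
namespace ConjPaper

open Classical

variable {X : Type*}

/-- The span: `dom(α) ∪ im(α)`. -/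
def pspan (α : PT X) : Set X := pdom α ∪ pim α

/-- Iterates `γ^k` of a partial transformation (`γ^0 = id`). -/
def pit (α : PT X) : ℕ → PT X
  | 0 => pid
  | n + 1 => pcomp (pit α n) α

/-- `φ` is a restrictive partial homomorphism (rp-homomorphism) from `Γ(α)` to `Γ(β)`:
(a) every arc `x → y` of `Γ(α)` has `x, y ∈ dom(φ)` and `xφ → yφ` an arc of `Γ(β)`;
(b) if `x` is terminal in `Γ(α)` and `x ∈ dom(φ)`, then `xφ` is terminal in `Γ(β)`. -/
def IsRpHom (α β φ : PT X) : Prop :=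
  (∀ x y, α x = some y →
    ∃ x' y', φ x = some x' ∧ φ y = some y' ∧ β x' = some y') ∧
  (∀ x x', α x = none → φ x = some x' → β x' = none)

/-!
Both sides say `αφ = φβ` together with `im α ⊆ dom φ`. For an rp-homomorphism this is
conditions (a) and (b) read pointwise. For `φ ∈ S`, membership in `𝔓(α)` is exactly
`im α ⊆ dom φ`: if `μ ∈ S` is the constant with value `x`, then `μα` is the nonzero constant
with value `xα`, so `(μα)φ ≠ 0` forces `xα ∈ dom φ`; conversely every element of `S¹α` has
its image inside `im α`.
-/

theorem ne_pzero_iff_pim_nonempty {γ : PT X} : γ ≠ pzero ↔ (pim γ).Nonempty := by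
  simp only [Ne, funext_iff, pzero, not_forall, Option.ne_none_iff_exists', pim,
    Set.Nonempty, Set.mem_ofPred_eq]
  exact exists_comm

theorem pcomp_ne_pzero_iff {γ g : PT X} : pcomp γ g ≠ pzero ↔ (pim γ ∩ pdom g).Nonempty := by
  simp only [Ne, funext_iff, pzero, pcomp, Option.bind_eq_none_iff, not_forall,
    Set.Nonempty, pim, pdom, Set.mem_inter_iff, Set.mem_ofPred_eq]
  constructor
  · rintro ⟨x, y, hxy, hy⟩
    exact ⟨y, ⟨x, hxy⟩, hy⟩
  · rintro ⟨y, ⟨x, hxy⟩, hy⟩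
    exact ⟨x, y, hxy, hy⟩

theorem pim_pcomp_subset (μ α : PT X) : pim (pcomp μ α) ⊆ pim α := by
  rintro y ⟨x, hx⟩
  obtain ⟨z, -, hz⟩ := Option.bind_eq_some_iff.mp hx
  exact ⟨z, hz⟩

theorem pim_pcomp_eq_singleton {μ α : PT X} {x y : X} (hμ : pim μ = {x}) (hxy : α x = some y) :
    pim (pcomp μ α) = {y} := by
  refine Set.eq_singleton_iff_unique_mem.mpr ⟨?_, ?_⟩
  · obtain ⟨z, hz⟩ : x ∈ pim μ := hμ ▸ rfl
    exact ⟨z, by simp [pcomp, hz, hxy]⟩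
  · rintro v ⟨w, hw⟩
    obtain ⟨u, hu, huv⟩ := Option.bind_eq_some_iff.mp hw
    obtain rfl : u = x := by
      rw [← Set.mem_singleton_iff, ← hμ]
      exact ⟨w, hu⟩
    exact Option.some_injective _ (huv.symm.trans hxy)

theorem isRpHom_iff {α β φ : PT X} :
    IsRpHom α β φ ↔ pcomp α φ = pcomp φ β ∧ pim α ⊆ pdom φ := by
  constructor
  · rintro ⟨harc, hterm⟩
    refine ⟨funext fun x => ?_, ?_⟩
    · cases hx : α x with
      | none =>
        cases hφx : φ x with
        | none => simp [pcomp, hx, hφx]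
        | some x' => simp [pcomp, hx, hφx, hterm x x' hx hφx]
      | some y =>
        obtain ⟨x', y', hx', hy', hxy'⟩ := harc x y hx
        simp [pcomp, hx, hx', hy', hxy']
    · rintro y ⟨x, hxy⟩
      obtain ⟨-, y', -, hy', -⟩ := harc x y hxy
      simp [pdom, hy']
  · rintro ⟨heq, him⟩
    have hpt (x : X) : (α x).bind φ = (φ x).bind β := congrFun heq x
    refine ⟨fun x y hxy => ?_, fun x x' hx hφx => ?_⟩
    · obtain ⟨y', hy'⟩ := Option.ne_none_iff_exists'.mp (him ⟨x, hxy⟩)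
      obtain ⟨x', hx', hxy'⟩ := Option.bind_eq_some_iff.mp <| by
        rw [← hpt x, hxy, Option.bind_some, hy']
      exact ⟨x', y', hx', hy', hxy'⟩
    · simpa [hx, hφx] using (hpt x).symm

theorem forall_leftIdeal_pcomp_ne_pzero_iff {S : Set (PT X)} (hCR : ConstRich S) {α g : PT X} :
    (∀ γ ∈ leftIdeal S α, γ ≠ pzero → pcomp γ g ≠ pzero) ↔ pim α ⊆ pdom g := by
  constructor
  · rintro h y ⟨x, hxy⟩
    obtain ⟨μ, hμS, hμ⟩ := hCR x
    have hμα := pim_pcomp_eq_singleton hμ hxy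
    have hμα0 : pcomp μ α ≠ pzero := ne_pzero_iff_pim_nonempty.mpr (hμα ▸ Set.singleton_nonempty y)
    obtain ⟨z, hz, hzg⟩ := pcomp_ne_pzero_iff.mp (h _ (Or.inr ⟨μ, hμS, rfl⟩) hμα0)
    rw [hμα, Set.mem_singleton_iff] at hz
    exact hz ▸ hzg
  · intro h γ hγ hγ0
    have hγα : pim γ ⊆ pim α := by
      rcases hγ with rfl | ⟨μ, -, rfl⟩
      exacts [subset_rfl, pim_pcomp_subset μ α]
    obtain ⟨y, hy⟩ := ne_pzero_iff_pim_nonempty.mp hγ0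
    exact pcomp_ne_pzero_iff.mpr ⟨y, hy, h (hγα hy)⟩

theorem mem_Pfrak1_iff {S : Set (PT X)} (hCR : ConstRich S) {α φ : PT X} (hα0 : α ≠ pzero) :
    φ ∈ Pfrak1 S α ↔ (φ ∈ S ∧ pim α ⊆ pdom φ) ∨ φ = pid := by
  simp only [Pfrak1, if_neg hα0, Set.mem_union, Set.mem_ofPred_eq, Set.mem_singleton_iff,
    forall_leftIdeal_pcomp_ne_pzero_iff hCR]

theorem pcomp_eq_and_mem_Pfrak1_iff_isRpHom_general (S : Set (PT X))
    (hCR : ConstRich S)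
    (α β : PT X) (hα0 : α ≠ pzero)
    (φ : PT X) (hφ : φ ∈ S ∨ φ = pid) :
    (pcomp α φ = pcomp φ β ∧ φ ∈ Pfrak1 S α) ↔ IsRpHom α β φ := by
  rw [isRpHom_iff, mem_Pfrak1_iff hCR hα0]
  refine and_congr_right fun _ => ⟨?_, fun h => hφ.imp (⟨·, h⟩) id⟩
  rintro (⟨-, h⟩ | rfl)
  · exact h
  · exact fun y _ => Option.some_ne_none y

/-- Lemma 3.7. Let `S` be a constant rich subsemigroup of `P(X)`,
`α, β ∈ S` with `α ≠ 0`, and `φ ∈ S¹` (that is, `φ ∈ S` or `φ = id_X`). Then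
`αφ = φβ` with `φ ∈ 𝔓¹(α)` if and only if `φ` is an rp-homomorphism from `Γ(α)` to `Γ(β)`. -/
theorem pcomp_eq_and_mem_Pfrak1_iff_isRpHom [Nonempty X] (S : Set (PT X))
    (hS : IsSubsemigroupPT S) (hCR : ConstRich S)
    (α β : PT X) (hαS : α ∈ S) (hβS : β ∈ S) (hα0 : α ≠ pzero)
    (φ : PT X) (hφ : φ ∈ S ∨ φ = pid) :
    (pcomp α φ = pcomp φ β ∧ φ ∈ Pfrak1 S α) ↔ IsRpHom α β φ :=
  pcomp_eq_and_mem_Pfrak1_iff_isRpHom_general S hCR α β hα0 φ hφ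

end ConjPaper
end

section
/- Let S be a constant rich subsemigroup of P(X) and let α, β ∈ S. Then α ~c β in S if and only if there exist φ, ψ ∈ S¹ such that φ is an rp-homomorphism from Γ(α) to Γ(β) and ψ is an rp-homomorphism from Γ(β) to Γ(α). -/
namespace ConjPaper

open Classical

variable {X : Type*}

/-- Conjugacy `α ~c β` in the subsemigroup `S` of `P(X)`:
`∃ φ ∈ 𝔓¹(α), ∃ ψ ∈ 𝔓¹(β), αφ = φβ ∧ βψ = ψα`. -/
def ConjS (S : Set (PT X)) (α β : PT X) : Prop :=
  ∃ φ ∈ Pfrak1 S α, ∃ ψ ∈ Pfrak1 S β,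
    pcomp α φ = pcomp φ β ∧ pcomp β ψ = pcomp ψ α

lemma pcomp_pid (α : PT X) : pcomp α pid = α := by
  funext x; unfold pcomp pid; cases α x <;> rfl

lemma pid_pcomp (α : PT X) : pcomp pid α = α := rfl

lemma pcomp_pzero (α : PT X) : pcomp α pzero = pzero := by
  funext x; unfold pcomp pzero; cases α x <;> rfl

lemma rp_comm {α β φ : PT X} (h : IsRpHom α β φ) : pcomp α φ = pcomp φ β := by
  funext x
  cases hx : α x with
  | some y =>
    obtain ⟨x', y', h1, h2, h3⟩ := h.1 x y hx
    simp [pcomp, hx, h1, h2, h3]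
  | none =>
    cases hφ : φ x with
    | some x' => simp [pcomp, hx, hφ, h.2 x x' hx hφ]
    | none => simp [pcomp, hx, hφ]

lemma rp_pid {α β : PT X} (h : IsRpHom α β pid) : α = β := by
  have := rp_comm h; rwa [pcomp_pid, pid_pcomp] at this

lemma rp_hom_refl (α : PT X) : IsRpHom α α pid := by
  refine ⟨fun x y h => ⟨x, y, rfl, rfl, h⟩, fun x x' h h' => ?_⟩
  have : x = x' := Option.some.inj h'
  rwa [← this]

lemma conjS_refl (S : Set (PT X)) (α : PT X) : ConjS S α α :=
  ⟨pid, Set.mem_union_right _ rfl, pid, Set.mem_union_right _ rfl,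
    by rw [pcomp_pid, pid_pcomp], by rw [pcomp_pid, pid_pcomp]⟩

lemma rp_to_zero {α φ : PT X} (h : IsRpHom α pzero φ) : α = pzero := by
  funext x
  cases hx : α x with
  | none => rfl
  | some y =>
    obtain ⟨x', y', _, _, h3⟩ := h.1 x y hx
    exact absurd h3 (by simp [pzero])

lemma mem_Pfrak1_of_rp {S : Set (PT X)} {α β φ : PT X} (hα : α ≠ pzero)
    (hφS : φ ∈ S) (h : IsRpHom α β φ) : φ ∈ Pfrak1 S α := by
  apply Set.mem_union_left
  rw [if_neg hα]
  refine ⟨hφS, fun γ hγ hγ0 hc => ?_⟩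
  -- find a point of γ whose value is in the image of α
  obtain ⟨w, hw⟩ : ∃ w, γ w ≠ none := by
    by_contra h'; push_neg at h'
    exact hγ0 (funext fun w => h' w)
  obtain ⟨y, hy, u, hu⟩ : ∃ y, γ w = some y ∧ ∃ u, α u = some y := by
    rcases hγ with rfl | ⟨μ, hμ, rfl⟩
    · cases hγw : γ w with
      | none => exact absurd hγw hw
      | some y => exact ⟨y, rfl, w, hγw⟩
    · cases hμw : μ w with
      | none => exact absurd (by simp [pcomp, hμw]) hw
      | some u =>
        cases hαu : α u with
        | none => exact absurd (by simp [pcomp, hμw, hαu]) hw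
        | some y => exact ⟨y, by simp [pcomp, hμw, hαu], u, hαu⟩
  obtain ⟨_, y', _, hy', _⟩ := h.1 u y hu
  have := congrFun hc w
  simp [pcomp, hy, hy', pzero] at this

lemma forward_rp (S : Set (PT X)) (hCR : ConstRich S) {α β φ : PT X}
    (hα0 : α ≠ pzero) (hφ : φ ∈ Pfrak1 S α)
    (h1 : pcomp α φ = pcomp φ β) : IsRpHom α β φ := by
  rcases hφ with hφ | hφ
  · rw [if_neg hα0] at hφ
    obtain ⟨hφS, hP⟩ := hφ
    constructor
    · intro x y hxy
      obtain ⟨γ, hγS, hγim⟩ := hCR x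
      obtain ⟨z, hz⟩ : ∃ z, γ z = some x := by
        have : x ∈ pim γ := by rw [hγim]; rfl
        exact this
      have hne : pcomp γ α ≠ pzero := by
        intro hcz
        have := congrFun hcz z
        simp [pcomp, hz, hxy, pzero] at this
      have h3 := hP (pcomp γ α) (Or.inr ⟨γ, hγS, rfl⟩) hne
      obtain ⟨w, hw⟩ : ∃ w, pcomp (pcomp γ α) φ w ≠ none := by
        by_contra hcz; push_neg at hcz
        exact h3 (funext fun w => hcz w)
      have hγw : γ w = some x := by
        cases hγw : γ w with
        | none => exact absurd (by simp [pcomp, hγw]) hw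
        | some u =>
          have hu : u ∈ pim γ := ⟨w, hγw⟩
          rw [hγim, Set.mem_singleton_iff] at hu
          exact congrArg some hu
      have hval : pcomp (pcomp γ α) φ w = φ y := by
        simp [pcomp, hγw, hxy]
      rw [hval] at hw
      obtain ⟨y', hφy⟩ : ∃ y', φ y = some y' := by
        cases hφy : φ y with
        | none => exact absurd hφy hw
        | some y' => exact ⟨y', rfl⟩
      have hx1 := congrFun h1 x
      have hL : pcomp α φ x = some y' := by simp [pcomp, hxy, hφy]
      rw [hL] at hx1
      cases hφx : φ x with
      | none =>
        rw [show pcomp φ β x = none by simp [pcomp, hφx]] at hx1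
        exact absurd hx1 (by simp)
      | some x' =>
        refine ⟨x', y', rfl, hφy, ?_⟩
        rw [show pcomp φ β x = β x' by simp [pcomp, hφx]] at hx1
        exact hx1.symm
    · intro x x' hx hφx
      have hx1 := congrFun h1 x
      rw [show pcomp α φ x = none by simp [pcomp, hx],
        show pcomp φ β x = β x' by simp [pcomp, hφx]] at hx1
      exact hx1.symm
  · have hφid : φ = pid := hφ
    subst hφid
    rw [pcomp_pid, pid_pcomp] at h1
    exact h1 ▸ rp_hom_refl α

/-- Theorem 3.8. Let `S` be a constant rich subsemigroup of `P(X)` and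
`α, β ∈ S`. Then `α ~c β` in `S` iff there are `φ, ψ ∈ S¹` such that `φ` is an
rp-homomorphism from `Γ(α)` to `Γ(β)` and `ψ` is an rp-homomorphism from `Γ(β)` to `Γ(α)`. -/
theorem conjS_iff_rpHoms [Nonempty X] (S : Set (PT X))
    (hS : IsSubsemigroupPT S) (hCR : ConstRich S)
    (α β : PT X) (hαS : α ∈ S) (hβS : β ∈ S) :
    ConjS S α β ↔
      ∃ φ ψ : PT X, (φ ∈ S ∨ φ = pid) ∧ (ψ ∈ S ∨ ψ = pid) ∧
        IsRpHom α β φ ∧ IsRpHom β α ψ := by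
  constructor
  · rintro ⟨φ, hφ, ψ, hψ, h1, h2⟩
    by_cases hα0 : α = pzero
    · subst hα0
      have hβ0 : β = pzero := by
        by_contra hβ
        rw [pcomp_pzero] at h2
        rcases hψ with h | h
        · rw [if_neg hβ] at h
          exact h.2 β (Or.inl rfl) hβ h2
        · have hψid : ψ = pid := h
          rw [hψid, pcomp_pid] at h2
          exact hβ h2
      subst hβ0
      exact ⟨pid, pid, Or.inr rfl, Or.inr rfl, rp_hom_refl pzero, rp_hom_refl pzero⟩
    · have hβ0 : β ≠ pzero := by
        intro hβ; subst hβ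
        rw [pcomp_pzero] at h1
        rcases hφ with h | h
        · rw [if_neg hα0] at h
          exact h.2 α (Or.inl rfl) hα0 h1
        · have hφid : φ = pid := h
          rw [hφid, pcomp_pid] at h1
          exact hα0 h1
      have hφS : φ ∈ S ∨ φ = pid := by
        rcases hφ with h | h
        · rw [if_neg hα0] at h; exact Or.inl h.1
        · exact Or.inr h
      have hψS : ψ ∈ S ∨ ψ = pid := by
        rcases hψ with h | h
        · rw [if_neg hβ0] at h; exact Or.inl h.1
        · exact Or.inr h
      exact ⟨φ, ψ, hφS, hψS, forward_rp S hCR hα0 hφ h1, forward_rp S hCR hβ0 hψ h2⟩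
  · rintro ⟨φ, ψ, hφ1, hψ1, hrpφ, hrpψ⟩
    by_cases hα0 : α = pzero
    · have hβ0 : β = pzero := by subst hα0; exact rp_to_zero hrpψ
      subst hα0; subst hβ0
      refine ⟨pzero, ?_, pzero, ?_, rfl, rfl⟩ <;>
        · apply Set.mem_union_left
          rw [if_pos rfl]; rfl
    · have hβ0 : β ≠ pzero := fun h => hα0 (rp_to_zero (h ▸ hrpφ))
      rcases hφ1 with hφS | hφid
      · rcases hψ1 with hψS | hψid
        · exact ⟨φ, mem_Pfrak1_of_rp hα0 hφS hrpφ, ψ, mem_Pfrak1_of_rp hβ0 hψS hrpψ,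
            rp_comm hrpφ, rp_comm hrpψ⟩
        · have hβα : β = α := rp_pid (hψid ▸ hrpψ)
          subst hβα
          exact conjS_refl S _
      · have hαβ : α = β := rp_pid (hφid ▸ hrpφ)
        subst hαβ
        exact conjS_refl S _

end ConjPaper
end

section
/- Let X be a finite nonempty set and let α, β ∈ P(X). Then α ~c β in P(X) if and only if cs(α) = cs(β) and s(α) = s(β). -/
namespace ConjPaper

open Classical

variable {X : Type*}

/-- `𝔓¹(α)` for the monoid `P(X)` itself: for `α ≠ 0`,
`𝔓(α) = {g : ∀ μ ∈ P(X) ∪ {id}, μα ≠ 0 → (μα)g ≠ 0}` together with `id_X`;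
and `𝔓¹(0) = {0, id_X}`. -/
noncomputable def Pfrak1P (α : PT X) : Set (PT X) :=
  (if α = pzero then {pzero}
   else {g | ∀ μ : PT X, pcomp μ α ≠ pzero → pcomp (pcomp μ α) g ≠ pzero}) ∪ {pid}

/-- Conjugacy `α ~c β` in `P(X)`. -/
def ConjP (α β : PT X) : Prop :=
  ∃ φ ∈ Pfrak1P α, ∃ ψ ∈ Pfrak1P β,
    pcomp α φ = pcomp φ β ∧ pcomp β ψ = pcomp ψ α

/-- `γ` has a cycle of length `k ≥ 1`. -/
def HasCycle (γ : PT X) (k : ℕ) : Prop :=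
  1 ≤ k ∧ ∃ x, pit γ k x = some x ∧ ∀ i, 1 ≤ i → i < k → pit γ i x ≠ some x

/-- `γ` has a cycle (of some length). -/
def HasCycleAny (γ : PT X) : Prop := ∃ k, HasCycle γ k

/-- The set `M(α)` of lengths of cycles of `α`. -/
def Mset (α : PT X) : Set ℕ := {n | HasCycle α n}

/-- The cycle set `cs(α)`: the divisibility-minimal elements of `M(α)`. -/
def cs (α : PT X) : Set ℕ := {n ∈ Mset α | ∀ m ∈ Mset α, m ∣ n → m = n}

/-- The equivalence used for connected components:
`x ~ y` iff `xα^k = yα^m` (both defined) for some `k, m ≥ 0`. -/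
def relP (α : PT X) (x y : X) : Prop :=
  ∃ k m z, pit α k x = some z ∧ pit α m y = some z

/-- `γ` is a connected component of `α`: the restriction of `α` to the `~`-class
(within `dom(α)`) of some `x₀ ∈ dom(α)`. -/
def IsComponent (α γ : PT X) : Prop :=
  ∃ x0, α x0 ≠ none ∧
    (∀ t, α t ≠ none → relP α t x0 → γ t = α t) ∧
    (∀ t, ¬(α t ≠ none ∧ relP α t x0) → γ t = none)

/-- The ordinal rank `ρ_γ(x)` with respect to `R_γ = {(y, x) : yγ = x}`
(value `0` if `R_γ` is not well founded, which does not occur in the intended uses). -/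
noncomputable def prank (γ : PT X) (x : X) : Ordinal :=
  if h : WellFounded (fun y z : X => γ y = some z) then (h.apply x).rank else 0

/-- `s(α)`: the supremum of the ranks of the roots (unique terminal vertices) of the
cycle-free connected components of `α` (`0` if there are none). -/
noncomputable def sVal (α : PT X) : Ordinal :=
  sSup {o : Ordinal | ∃ γ : PT X, IsComponent α γ ∧ ¬HasCycleAny γ ∧
    ∃ x0 ∈ pspan γ, γ x0 = none ∧ o = prank γ x0}

/-!
View a partial map `α` as the total map `lift α : o ↦ o.bind α` of `Option X`, in which `none`
absorbs every orbit that leaves `dom α`. The conjugators allowed by `Pfrak1P α` are the maps `φ`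
defined on `im α` with `αφ = φβ`, i.e. with `lift φ` semiconjugating `lift α` to `lift β`.

Such a `φ` exists iff every cycle length of `α` is a multiple of one of `β` and the longest time an
orbit of `α` takes to leave `dom α` is at most that of `β`. Necessity: `lift φ` sends a point of
period `n` to one of period dividing `n`, and an orbit leaving at time `d` to one leaving at time
`d`. Sufficiency: each cycle of `α`, with the trees feeding it, is wound around a `β`-cycle of
dividing length, and the points whose orbits leave `dom α` are laid along one longest such orbit of
`β`. Imposed in both directions, the conditions say `cs α = cs β` and that the longest leaving times
agree; the latter is `s(α)`, as the rank of the root of a cycle-free component is the length of the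
longest path into it.
-/

open Function

section Dynamics

variable {Y Z : Type*} (f : Y → Y) (g : Z → Z)

theorem exists_iterate_iterate_eq {x : Y} (hx : x ∈ periodicPts f) (m : ℕ) :
    ∃ k, f^[k] (f^[m] x) = x := by
  have hm : f^[m] x ∈ periodicPts f :=
    mk_mem_periodicPts (minimalPeriod_pos_of_mem_periodicPts hx)
      ((isPeriodicPt_minimalPeriod f x).apply_iterate m)
  rw [← mem_periodicOrbit_iff hm, periodicOrbit_apply_iterate_eq hx]
  exact self_mem_periodicOrbit hx

theorem iterate_eq_iterate_of_isPeriodicPt {x : Y} {z : Z} (hx : x ∈ periodicPts f)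
    (hz : IsPeriodicPt g (minimalPeriod f x) z) {i j : ℕ} (h : f^[i] x = f^[j] x) :
    g^[i] z = g^[j] z := by
  have hpos := minimalPeriod_pos_of_mem_periodicPts hx
  rw [← iterate_mod_minimalPeriod_eq (n := i), ← iterate_mod_minimalPeriod_eq (n := j),
    iterate_eq_iterate_iff_of_lt_minimalPeriod (Nat.mod_lt _ hpos) (Nat.mod_lt _ hpos)] at h
  rw [← hz.iterate_mod_apply i, h, hz.iterate_mod_apply]

def reachablePeriodicPts (y : Y) : Set Y := {z ∈ periodicPts f | ∃ i, f^[i] y = z}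

theorem reachablePeriodicPts_apply (y : Y) :
    reachablePeriodicPts f (f y) = reachablePeriodicPts f y := by
  ext z
  refine ⟨fun ⟨hz, i, hi⟩ => ⟨hz, i + 1, by rwa [iterate_succ_apply]⟩, fun ⟨hz, i, hi⟩ => ⟨hz, ?_⟩⟩
  obtain ⟨k, hk⟩ := exists_iterate_iterate_eq f hz 1
  refine ⟨k + i, ?_⟩
  rw [iterate_add_apply, ← iterate_succ_apply, iterate_succ_apply', hi]
  exact hk

variable [Finite Y]

theorem iterate_card_mem_periodicPts (y : Y) : f^[Nat.card Y] y ∈ periodicPts f := by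
  obtain ⟨i, j, hij, heq⟩ : ∃ i j : Fin (Nat.card Y + 1), i < j ∧ f^[i] y = f^[j] y := by
    by_contra! h
    have hinj : Injective fun i : Fin (Nat.card Y + 1) => f^[i] y := fun i j hij => by
      rcases lt_trichotomy i j with hlt | heq | hlt
      exacts [absurd hij (h i j hlt), heq, absurd hij.symm (h j i hlt)]
    have := Nat.card_le_card_of_injective _ hinj
    simp at this
  have hper : IsPeriodicPt f (j - i) (f^[i] y) := by
    change f^[j - i] (f^[i] y) = f^[i] y
    rw [← iterate_add_apply, Nat.sub_add_cancel hij.le, heq]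
  have := hper.apply_iterate (Nat.card Y - i)
  rw [← iterate_add_apply, Nat.sub_add_cancel (by omega)] at this
  exact mk_mem_periodicPts (by omega) this

theorem reachablePeriodicPts_nonempty (y : Y) : (reachablePeriodicPts f y).Nonempty :=
  ⟨_, iterate_card_mem_periodicPts f y, _, rfl⟩

noncomputable def cyclePoint (y : Y) : Y := (reachablePeriodicPts_nonempty f y).some

theorem cyclePoint_mem (y : Y) : cyclePoint f y ∈ reachablePeriodicPts f y :=
  Set.Nonempty.some_mem _

theorem cyclePoint_apply (y : Y) : cyclePoint f (f y) = cyclePoint f y := by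
  simp only [cyclePoint, reachablePeriodicPts_apply]

theorem exists_iterate_cyclePoint_eq (y : Y) : ∃ j, f^[j] (cyclePoint f y) = f^[Nat.card Y] y := by
  obtain ⟨-, i, hi⟩ := cyclePoint_mem f y
  rcases le_total i (Nat.card Y) with h | h
  · exact ⟨Nat.card Y - i, by rw [← hi, ← iterate_add_apply, Nat.sub_add_cancel h]⟩
  · rw [← hi, ← Nat.sub_add_cancel h, iterate_add_apply]
    exact exists_iterate_iterate_eq f (iterate_card_mem_periodicPts f y) _

noncomputable def cyclePhase (y : Y) : ℕ := (exists_iterate_cyclePoint_eq f y).choose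

theorem iterate_cyclePhase (y : Y) :
    f^[cyclePhase f y] (cyclePoint f y) = f^[Nat.card Y] y :=
  (exists_iterate_cyclePoint_eq f y).choose_spec

noncomputable def periodicExtension (t : Y → Z) (y : Y) : Z :=
  g^[cyclePhase f y] (t (cyclePoint f y))

theorem semiconj_periodicExtension {t : Y → Z}
    (ht : ∀ x ∈ periodicPts f, IsPeriodicPt g (minimalPeriod f x) (t x)) :
    Semiconj (periodicExtension f g t) f g := by
  intro y
  have hc := (cyclePoint_mem f y).1
  have hphase : f^[cyclePhase f (f y)] (cyclePoint f y) =
      f^[cyclePhase f y + 1] (cyclePoint f y) := by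
    calc f^[cyclePhase f (f y)] (cyclePoint f y)
        = f^[Nat.card Y] (f y) := by rw [← cyclePoint_apply f y, iterate_cyclePhase]
      _ = f (f^[cyclePhase f y] (cyclePoint f y)) := by
        rw [iterate_cyclePhase, ← iterate_succ_apply, iterate_succ_apply']
      _ = f^[cyclePhase f y + 1] (cyclePoint f y) := (iterate_succ_apply' ..).symm
  rw [periodicExtension, periodicExtension, cyclePoint_apply,
    iterate_eq_iterate_of_isPeriodicPt f g hc (ht _ hc) hphase, iterate_succ_apply']

end Dynamics

section PartialMaps

variable {α β γ φ : PT X} {x y : X}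

def lift (α : PT X) : Option X → Option X := fun o => o.bind α

@[simp] theorem lift_none : lift α none = none := rfl

@[simp] theorem lift_some : lift α (some x) = α x := rfl

@[simp] theorem iterate_lift_none (n : ℕ) : (lift α)^[n] none = none := iterate_fixed rfl n

theorem pit_eq_iterate (α : PT X) (n : ℕ) (x : X) : pit α n x = (lift α)^[n] (some x) := by
  induction n with
  | zero => rfl
  | succ n ih => rw [iterate_succ_apply', ← ih]; rfl

theorem iterate_lift_eq_none_of_le {o : Option X} {m n : ℕ} (h : (lift α)^[m] o = none)
    (hmn : m ≤ n) : (lift α)^[n] o = none := by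
  rw [← Nat.sub_add_cancel hmn, iterate_add_apply, h, iterate_lift_none]

theorem iterate_lift_ne_none (hx : some x ∈ periodicPts (lift α)) (n : ℕ) :
    (lift α)^[n] (some x) ≠ none := by
  obtain ⟨k, hk⟩ := exists_iterate_iterate_eq _ hx n
  intro h
  rw [h, iterate_lift_none] at hk
  cases hk

theorem mem_pim_of_iterate_eq {n : ℕ} (hn : n ≠ 0) (h : (lift α)^[n] (some x) = some y) :
    y ∈ pim α := by
  obtain ⟨m, rfl⟩ := Nat.exists_eq_succ_of_ne_zero hn
  rw [iterate_succ_apply'] at h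
  cases hw : (lift α)^[m] (some x) with
  | none => rw [hw] at h; cases h
  | some w => rw [hw] at h; exact ⟨w, h⟩

theorem iterate_lift_eq_some_of_le (hle : ∀ t u, γ t = some u → α t = some u) {n : ℕ}
    {o : Option X} {u : X} (h : (lift γ)^[n] o = some u) : (lift α)^[n] o = some u := by
  induction n generalizing u with
  | zero => exact h
  | succ n ih =>
    rw [iterate_succ_apply'] at h ⊢
    cases hv : (lift γ)^[n] o with
    | none => rw [hv] at h; cases h
    | some v => rw [hv] at h; rw [ih hv]; exact hle v u h

theorem hasCycle_iff {k : ℕ} :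
    HasCycle α k ↔ 0 < k ∧ ∃ x, minimalPeriod (lift α) (some x) = k := by
  simp only [HasCycle, pit_eq_iterate]
  constructor
  · rintro ⟨hk, x, hx, hmin⟩
    refine ⟨hk, x, le_antisymm (IsPeriodicPt.minimalPeriod_le hk hx) (not_lt.1 fun hlt => ?_)⟩
    exact hmin _ (IsPeriodicPt.minimalPeriod_pos hk hx) hlt (isPeriodicPt_minimalPeriod _ _)
  · rintro ⟨hk, x, rfl⟩
    exact ⟨hk, x, isPeriodicPt_minimalPeriod _ _,
      fun i hi hlt => not_isPeriodicPt_of_pos_of_lt_minimalPeriod (f := lift α) (by omega) hlt⟩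

theorem hasCycleAny_iff : HasCycleAny α ↔ ∃ x, some x ∈ periodicPts (lift α) := by
  constructor
  · rintro ⟨k, hk⟩
    obtain ⟨hk, x, rfl⟩ := hasCycle_iff.1 hk
    exact ⟨x, minimalPeriod_pos_iff_mem_periodicPts.1 hk⟩
  · rintro ⟨x, hx⟩
    exact ⟨_, hasCycle_iff.2 ⟨minimalPeriod_pos_of_mem_periodicPts hx, x, rfl⟩⟩

theorem pcomp_eq_pcomp_iff : pcomp α φ = pcomp φ β ↔ Semiconj (lift φ) (lift α) (lift β) := by
  refine ⟨fun h => ?_, fun h => funext fun x => h (some x)⟩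
  rintro (_ | x)
  exacts [rfl, congrFun h x]

def Dies (α : PT X) (x : X) : Prop := ∃ n, (lift α)^[n] (some x) = none

/-- The time at which the orbit of `x` leaves `dom α`, junk `0` if it never does. -/
noncomputable def depth (α : PT X) (x : X) : ℕ := sInf {n | (lift α)^[n + 1] (some x) = none}

theorem depth_eq {n : ℕ} (h : (lift α)^[n] (some x) ≠ none)
    (h' : (lift α)^[n + 1] (some x) = none) : depth α x = n :=
  le_antisymm (Nat.sInf_le h') <| not_lt.1 fun hlt => by
    have hmem : depth α x ∈ {n | (lift α)^[n + 1] (some x) = none} := Nat.sInf_mem ⟨n, h'⟩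
    exact h (iterate_lift_eq_none_of_le hmem hlt)

theorem Dies.iterate_depth (hx : Dies α x) :
    (lift α)^[depth α x] (some x) ≠ none ∧ (lift α)^[depth α x + 1] (some x) = none := by
  have hx' : ∃ n, (lift α)^[n] (some x) = none := hx
  have hfind := Nat.find_spec hx'
  obtain ⟨n, hn⟩ : ∃ n, Nat.find hx' = n + 1 :=
    Nat.exists_eq_succ_of_ne_zero fun h0 => by rw [h0] at hfind; cases hfind
  have hlast : (lift α)^[n + 1] (some x) = none := hn ▸ hfind
  have hprev : (lift α)^[n] (some x) ≠ none := Nat.find_min hx' (by omega)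
  rw [depth_eq hprev hlast]
  exact ⟨hprev, hlast⟩

theorem depth_eq_zero (h : α x = none) : depth α x = 0 :=
  depth_eq (by simp) h

theorem dies_iff_of_apply (h : α x = some y) : Dies α x ↔ Dies α y := by
  have key : ∀ n, (lift α)^[n + 1] (some x) = (lift α)^[n] (some y) := fun n => by
    rw [iterate_succ_apply, lift_some, h]
  refine ⟨fun ⟨n, hn⟩ => ?_, fun ⟨n, hn⟩ => ⟨n + 1, by rwa [key]⟩⟩
  obtain ⟨m, rfl⟩ := Nat.exists_eq_succ_of_ne_zero (n := n) (by rintro rfl; cases hn)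
  exact ⟨m, by rwa [← key]⟩

theorem depth_apply (h : α x = some y) (hy : Dies α y) : depth α x = depth α y + 1 := by
  have key : ∀ n, (lift α)^[n + 1] (some x) = (lift α)^[n] (some y) := fun n => by
    rw [iterate_succ_apply, lift_some, h]
  exact depth_eq (by rw [key]; exact hy.iterate_depth.1) (by rw [key]; exact hy.iterate_depth.2)

def depths (α : PT X) : Set ℕ := depth α '' {x | Dies α x}

noncomputable def maxDepth (α : PT X) : ℕ := sSup (depths α)

theorem bddAbove_depths [Finite X] : BddAbove (depths α) :=
  ((Set.toFinite _).image _).bddAbove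

theorem depth_le_maxDepth [Finite X] (hx : Dies α x) : depth α x ≤ maxDepth α :=
  le_csSup bddAbove_depths ⟨x, hx, rfl⟩

theorem exists_depth_eq_maxDepth [Finite X] (h : 0 < maxDepth α) :
    ∃ x, Dies α x ∧ depth α x = maxDepth α := by
  refine Nat.sSup_mem (Set.nonempty_iff_ne_empty.2 fun he => ?_) bddAbove_depths
  rw [maxDepth, he, csSup_empty] at h
  exact lt_irrefl 0 h

theorem exists_mem_cs_dvd {n : ℕ} (hn : n ∈ Mset α) : ∃ m ∈ cs α, m ∣ n := by
  have hex : ∃ m, m ∈ Mset α ∧ m ∣ n := ⟨n, hn, dvd_rfl⟩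
  obtain ⟨hm, hmn⟩ := Nat.find_spec hex
  refine ⟨_, ⟨hm, fun l hl hlm => le_antisymm (Nat.le_of_dvd hm.1 hlm) ?_⟩, hmn⟩
  exact Nat.find_min' hex ⟨hl, hlm.trans hmn⟩

theorem cs_subset_cs (hαβ : ∀ n ∈ Mset α, ∃ m ∈ Mset β, m ∣ n)
    (hβα : ∀ n ∈ Mset β, ∃ m ∈ Mset α, m ∣ n) : cs α ⊆ cs β := by
  rintro n ⟨hn, hmin⟩
  obtain ⟨m, hm, hmn⟩ := hαβ n hn
  obtain ⟨k, hk, hkm⟩ := hβα m hm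
  obtain rfl : k = n := hmin k hk (hkm.trans hmn)
  obtain rfl : m = k := Nat.dvd_antisymm hmn hkm
  refine ⟨hm, fun l hl hlm => ?_⟩
  obtain ⟨k, hk, hkl⟩ := hβα l hl
  obtain rfl : k = m := hmin k hk (hkl.trans hlm)
  exact Nat.dvd_antisymm hlm hkl

theorem exists_dvd_of_cs_subset (h : cs α ⊆ cs β) {n : ℕ} (hn : n ∈ Mset α) :
    ∃ m ∈ Mset β, m ∣ n := by
  obtain ⟨m, hm, hmn⟩ := exists_mem_cs_dvd hn
  exact ⟨m, (h hm).1, hmn⟩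

theorem cs_eq_cs_iff : cs α = cs β ↔
    (∀ n ∈ Mset α, ∃ m ∈ Mset β, m ∣ n) ∧ ∀ n ∈ Mset β, ∃ m ∈ Mset α, m ∣ n :=
  ⟨fun h => ⟨fun _ => exists_dvd_of_cs_subset h.subset,
      fun _ => exists_dvd_of_cs_subset h.symm.subset⟩,
    fun ⟨hαβ, hβα⟩ => (cs_subset_cs hαβ hβα).antisymm (cs_subset_cs hβα hαβ)⟩

def Intertwines (α β φ : PT X) : Prop := pim α ⊆ pdom φ ∧ pcomp α φ = pcomp φ β

theorem pim_subset_pdom_of_mem_Pfrak1P (hα : α ≠ pzero) (hφ : φ ∈ Pfrak1P α) :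
    pim α ⊆ pdom φ := by
  rintro y ⟨x, hxy⟩ hy
  rcases hφ with hφ | rfl
  · rw [if_neg hα] at hφ
    refine hφ (fun _ => some x) (fun h => ?_) (funext fun _ => ?_)
    · have := congrFun h x
      simp [pcomp, hxy, pzero] at this
    · simp [pcomp, hxy, hy, pzero]
  · cases hy

theorem mem_Pfrak1P_of_pim_subset (hα : α ≠ pzero) (h : pim α ⊆ pdom φ) : φ ∈ Pfrak1P α := by
  left
  rw [if_neg hα]
  intro μ hμ h0
  obtain ⟨x, hx⟩ := Function.ne_iff.1 hμ
  cases hμx : μ x with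
  | none => simp [pcomp, hμx, pzero] at hx
  | some w =>
    cases hwy : α w with
    | none => simp [pcomp, hμx, hwy, pzero] at hx
    | some y =>
      have := congrFun h0 x
      simp only [pcomp, hμx, hwy, Option.bind_some, pzero] at this
      exact h ⟨w, hwy⟩ this

theorem exists_mem_Pfrak1P_iff :
    (∃ φ ∈ Pfrak1P α, pcomp α φ = pcomp φ β) ↔ ∃ φ, Intertwines α β φ := by
  by_cases hα : α = pzero
  · subst hα
    refine ⟨fun _ => ⟨pzero, ?_, rfl⟩, fun _ => ⟨pzero, Or.inl (by rw [if_pos rfl]; rfl), rfl⟩⟩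
    rintro _ ⟨_, h⟩
    cases h
  · exact ⟨fun ⟨φ, hφ, h⟩ => ⟨φ, pim_subset_pdom_of_mem_Pfrak1P hα hφ, h⟩,
      fun ⟨φ, hφ, h⟩ => ⟨φ, mem_Pfrak1P_of_pim_subset hα hφ, h⟩⟩

theorem conjP_iff_intertwines :
    ConjP α β ↔ (∃ φ, Intertwines α β φ) ∧ ∃ ψ, Intertwines β α ψ := by
  rw [← exists_mem_Pfrak1P_iff, ← exists_mem_Pfrak1P_iff]
  exact ⟨fun ⟨φ, hφ, ψ, hψ, h₁, h₂⟩ => ⟨⟨φ, hφ, h₁⟩, ψ, hψ, h₂⟩,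
    fun ⟨⟨φ, hφ, h₁⟩, ψ, hψ, h₂⟩ => ⟨φ, hφ, ψ, hψ, h₁, h₂⟩⟩

theorem Intertwines.semiconj (h : Intertwines α β φ) : Semiconj (lift φ) (lift α) (lift β) :=
  pcomp_eq_pcomp_iff.1 h.2

theorem Intertwines.pspan_subset (h : Intertwines α β φ) : pspan α ⊆ pdom φ := by
  rintro x (hx | hx)
  · obtain ⟨y, hxy⟩ := Option.ne_none_iff_exists'.1 hx
    intro hφx
    have := h.semiconj (some x)
    simp only [lift_some, hxy, hφx, lift_none] at this
    exact h.1 ⟨x, hxy⟩ this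
  · exact h.1 hx

theorem Intertwines.exists_dvd (h : Intertwines α β φ) {n : ℕ} (hn : n ∈ Mset α) :
    ∃ m ∈ Mset β, m ∣ n := by
  obtain ⟨hn0, x, rfl⟩ := hasCycle_iff.1 hn
  have hx := isPeriodicPt_minimalPeriod (lift α) (some x)
  obtain ⟨x', hx'⟩ := Option.ne_none_iff_exists'.1 (h.1 (mem_pim_of_iterate_eq hn0.ne' hx))
  have hper : IsPeriodicPt (lift β) (minimalPeriod (lift α) (some x)) (some x') := by
    simpa only [lift_some, hx'] using hx.map h.semiconj
  exact ⟨_, hasCycle_iff.2 ⟨hper.minimalPeriod_pos hn0, x', rfl⟩, hper.minimalPeriod_dvd⟩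

theorem Intertwines.depth_mem_depths (h : Intertwines α β φ) (hx : Dies α x) (hαx : α x ≠ none) :
    depth α x ∈ depths β := by
  obtain ⟨hne, hnone⟩ := hx.iterate_depth
  obtain ⟨x0, hx0⟩ := Option.ne_none_iff_exists'.1 hne
  obtain ⟨x', hx'⟩ := Option.ne_none_iff_exists'.1 (h.pspan_subset (Or.inl hαx))
  have hiter : ∀ n, (lift β)^[n] (some x') = lift φ ((lift α)^[n] (some x)) := fun n => by
    rw [← hx', ← lift_some (α := φ), h.semiconj.iterate_right n]
  have hdepth : depth α x ≠ 0 := fun h0 => hαx (by simpa [h0] using hnone)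
  have hlast : (lift β)^[depth α x + 1] (some x') = none := by rw [hiter, hnone]; rfl
  refine ⟨x', ⟨_, hlast⟩, depth_eq ?_ hlast⟩
  rw [hiter, hx0]
  exact h.1 (mem_pim_of_iterate_eq hdepth hx0)

theorem Intertwines.maxDepth_le [Finite X] (h : Intertwines α β φ) : maxDepth α ≤ maxDepth β := by
  refine csSup_le' ?_
  rintro _ ⟨x, hx, rfl⟩
  by_cases hαx : α x = none
  · rw [depth_eq_zero hαx]
    exact Nat.zero_le _
  · exact le_csSup bddAbove_depths (h.depth_mem_depths hx hαx)

theorem relP_of_apply {w : X} (h : relP α w y) (hw : α w = some x) : relP α x y := by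
  obtain ⟨k, m, z, hk, hm⟩ := h
  rw [pit_eq_iterate] at hk hm
  cases k with
  | zero =>
    cases hk
    exact ⟨0, m + 1, x, rfl, by rw [pit_eq_iterate, iterate_succ_apply', hm]; exact hw⟩
  | succ k =>
    rw [iterate_succ_apply, lift_some, hw] at hk
    exact ⟨k, m, z, by rwa [pit_eq_iterate], by rwa [pit_eq_iterate]⟩

theorem not_relP_of_mem_periodicPts {p : X} (hp : some p ∈ periodicPts (lift α))
    (hx : Dies α x) : ¬relP α p x := by
  rintro ⟨k, m, z, hk, hm⟩
  obtain ⟨t, ht⟩ := hx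
  rw [pit_eq_iterate] at hk hm
  apply iterate_lift_ne_none hp (t + k)
  rw [iterate_add_apply, hk, ← hm, ← iterate_add_apply, add_comm, iterate_add_apply, ht,
    iterate_lift_none]

theorem IsComponent.apply_eq_some (h : IsComponent α γ) {u : X} (hγ : γ x = some u) :
    α x = some u := by
  obtain ⟨c, -, h₁, h₂⟩ := h
  by_cases hc : α x ≠ none ∧ relP α x c
  · rwa [← h₁ x hc.1 hc.2]
  · rw [h₂ x hc] at hγ
    cases hγ

theorem IsComponent.apply_eq_none (h : IsComponent α γ) (hx : x ∈ pspan γ) (hγx : γ x = none) :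
    α x = none := by
  rcases hx with hx | ⟨w, hw⟩
  · exact absurd hγx hx
  obtain ⟨c, -, h₁, h₂⟩ := id h
  have hwc : α w ≠ none ∧ relP α w c := by
    by_contra hc
    rw [h₂ w hc] at hw
    cases hw
  by_contra hαx
  rw [h₁ x hαx (relP_of_apply hwc.2 (h.apply_eq_some hw))] at hγx
  exact hαx hγx

noncomputable def componentOf (α : PT X) (x₀ : X) : PT X :=
  fun t => if α t ≠ none ∧ relP α t x₀ then α t else none

theorem isComponent_componentOf (h : α x ≠ none) : IsComponent α (componentOf α x) :=
  ⟨x, h, fun _ ht hr => if_pos ⟨ht, hr⟩, fun _ ht => if_neg ht⟩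

theorem iterate_componentOf {n : ℕ} (h : (lift α)^[n] (some x) ≠ none) :
    (lift (componentOf α x))^[n] (some x) = (lift α)^[n] (some x) := by
  induction n with
  | zero => rfl
  | succ n ih =>
    have hn : (lift α)^[n] (some x) ≠ none := fun hn => h (by rw [iterate_succ_apply', hn]; rfl)
    obtain ⟨t, ht⟩ := Option.ne_none_iff_exists'.1 hn
    have hαt : α t ≠ none := by rwa [iterate_succ_apply', ht] at h
    rw [iterate_succ_apply', iterate_succ_apply', ih hn, ht]
    exact if_pos ⟨hαt, 0, n, t, rfl, by rw [pit_eq_iterate, ht]⟩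

theorem componentOf_eq_some {t u : X} (h : componentOf α x t = some u) : α t = some u := by
  unfold componentOf at h
  split_ifs at h
  exact h

theorem not_hasCycleAny_componentOf (hx : Dies α x) : ¬HasCycleAny (componentOf α x) := by
  rw [hasCycleAny_iff]
  rintro ⟨p, hp⟩
  obtain ⟨n, hn, hper⟩ := mem_periodicPts.1 hp
  have hpα : some p ∈ periodicPts (lift α) :=
    mk_mem_periodicPts hn (iterate_lift_eq_some_of_le (fun _ _ => componentOf_eq_some) hper)
  have hrel : α p ≠ none ∧ relP α p x := by
    by_contra hc
    exact iterate_lift_ne_none hp 1 (if_neg hc)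
  exact not_relP_of_mem_periodicPts hpα hx hrel.2

theorem wellFounded_of_not_hasCycleAny [Finite X] (h : ¬HasCycleAny γ) :
    WellFounded fun y z : X => γ y = some z := by
  have hpath : ∀ {a b}, Relation.TransGen (fun y z : X => γ y = some z) a b →
      ∃ n, 0 < n ∧ (lift γ)^[n] (some a) = some b := by
    intro a b hab
    induction hab with
    | single hab => exact ⟨1, one_pos, hab⟩
    | tail _ hbc ih =>
      obtain ⟨n, hn, hab⟩ := ih
      exact ⟨n + 1, n.succ_pos, by rw [iterate_succ_apply', hab]; exact hbc⟩
  have : IsTrans X (Relation.TransGen fun y z : X => γ y = some z) :=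
    ⟨fun _ _ _ => Relation.TransGen.trans⟩
  have : Std.Irrefl (Relation.TransGen fun y z : X => γ y = some z) := ⟨fun a ha => by
    obtain ⟨n, hn, hper⟩ := hpath ha
    exact h (hasCycleAny_iff.2 ⟨a, mk_mem_periodicPts hn hper⟩)⟩
  exact Subrelation.wf (r := Relation.TransGen fun y z : X => γ y = some z)
    (fun h => Relation.TransGen.single h) (Finite.wellFounded_of_trans_of_irrefl _)

theorem Acc.lt_rank_iff {Y : Type*} {r : Y → Y → Prop} {a : Y} (h : Acc r a) {o : Ordinal} :
    o < h.rank ↔ ∃ b, ∃ hb : r b a, o ≤ (h.inv hb).rank := by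
  rw [h.rank_eq, Ordinal.lt_iSup_iff]
  simp only [Order.lt_succ_iff, Subtype.exists]

theorem natCast_le_prank_iff [Finite X] (h : ¬HasCycleAny γ) {n : ℕ} :
    (n : Ordinal) ≤ prank γ x ↔ ∃ y, (lift γ)^[n] (some y) = some x := by
  have hwf := wellFounded_of_not_hasCycleAny h
  induction n generalizing x with
  | zero => simp
  | succ n ih =>
    rw [Nat.cast_succ, Order.add_one_le_iff, prank, dif_pos hwf, Acc.lt_rank_iff]
    simp only [iterate_succ_apply']
    constructor
    · rintro ⟨w, hw, hn⟩
      obtain ⟨y, hy⟩ := ih.1 (by rwa [prank, dif_pos hwf])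
      exact ⟨y, by rw [hy]; exact hw⟩
    · rintro ⟨y, hy⟩
      cases hw : (lift γ)^[n] (some y) with
      | none => rw [hw] at hy; cases hy
      | some w =>
        rw [hw] at hy
        have := ih.2 ⟨y, hw⟩
        rw [prank, dif_pos hwf] at this
        exact ⟨w, hy, this⟩

theorem prank_le_sVal [Finite X] (hγ : IsComponent α γ) (hc : ¬HasCycleAny γ)
    (hx : x ∈ pspan γ) (hroot : γ x = none) : prank γ x ≤ sVal α := by
  refine le_csSup ?_ ⟨γ, hγ, hc, x, hx, hroot, rfl⟩
  refine ((Set.finite_range fun p : PT X × X => prank p.1 p.2).subset ?_).bddAbove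
  rintro _ ⟨γ, -, -, x, -, -, rfl⟩
  exact ⟨(γ, x), rfl⟩

theorem prank_le_maxDepth [Finite X] (hγ : IsComponent α γ) (hc : ¬HasCycleAny γ)
    (hx : x ∈ pspan γ) (hroot : γ x = none) : prank γ x ≤ maxDepth α := by
  by_contra! hlt
  obtain ⟨y, hy⟩ := (natCast_le_prank_iff (n := maxDepth α + 1) hc).1 <| by
    rw [Nat.cast_succ]
    exact Order.add_one_le_of_lt hlt
  have hyα := iterate_lift_eq_some_of_le (fun _ _ => hγ.apply_eq_some) hy
  have hlast : (lift α)^[maxDepth α + 1 + 1] (some y) = none := by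
    rw [iterate_succ_apply', hyα]
    exact hγ.apply_eq_none hx hroot
  have := depth_le_maxDepth ⟨_, hlast⟩
  rw [depth_eq (by rw [hyα]; simp) hlast] at this
  omega

theorem depth_le_sVal [Finite X] (hx : Dies α x) (hαx : α x ≠ none) :
    (depth α x : Ordinal) ≤ sVal α := by
  obtain ⟨hne, hnone⟩ := hx.iterate_depth
  obtain ⟨x₀, hx₀⟩ := Option.ne_none_iff_exists'.1 hne
  have hγ : (lift (componentOf α x))^[depth α x] (some x) = some x₀ :=
    (iterate_componentOf hne).trans hx₀
  have hdepth : depth α x ≠ 0 := fun h0 => hαx (by simpa [h0] using hnone)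
  have hroot : componentOf α x x₀ = none :=
    if_neg fun h => h.1 (by rwa [iterate_succ_apply', hx₀] at hnone)
  exact ((natCast_le_prank_iff (not_hasCycleAny_componentOf hx)).2 ⟨x, hγ⟩).trans
    (prank_le_sVal (isComponent_componentOf hαx) (not_hasCycleAny_componentOf hx)
      (Or.inr (mem_pim_of_iterate_eq hdepth hγ)) hroot)

theorem sVal_eq_maxDepth [Finite X] (α : PT X) : sVal α = maxDepth α := by
  refine le_antisymm (csSup_le' ?_) ?_
  · rintro _ ⟨γ, hγ, hc, x, hx, hroot, rfl⟩
    exact prank_le_maxDepth hγ hc hx hroot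
  · rcases Nat.eq_zero_or_pos (maxDepth α) with h | h
    · simp [h]
    · obtain ⟨x, hx, hdx⟩ := exists_depth_eq_maxDepth h
      have hαx : α x ≠ none := fun h0 => by
        rw [depth_eq_zero h0] at hdx
        omega
      rw [← hdx]
      exact depth_le_sVal hx hαx

theorem exists_cycle_targets (hM : ∀ n ∈ Mset α, ∃ m ∈ Mset β, m ∣ n) :
    ∃ t : Option X → Option X,
      (∀ z ∈ periodicPts (lift α), IsPeriodicPt (lift β) (minimalPeriod (lift α) z) (t z)) ∧
      ∀ c, t (some c) ≠ none := by
  have : ∀ z : Option X, ∃ w : Option X,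
      (z ∈ periodicPts (lift α) → IsPeriodicPt (lift β) (minimalPeriod (lift α) z) w) ∧
      (z ≠ none → w ≠ none) := by
    rintro (_ | c)
    · exact ⟨none, fun _ => (show IsFixedPt (lift β) none from rfl).isPeriodicPt _,
        fun h => absurd rfl h⟩
    by_cases hc : some c ∈ periodicPts (lift α)
    · obtain ⟨m, hm, hmn⟩ :=
        hM _ (hasCycle_iff.2 ⟨minimalPeriod_pos_of_mem_periodicPts hc, c, rfl⟩)
      obtain ⟨-, b, rfl⟩ := hasCycle_iff.1 hm
      exact ⟨some b, fun _ => (isPeriodicPt_minimalPeriod _ _).trans_dvd hmn,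
        fun _ => Option.some_ne_none b⟩
    · exact ⟨some c, fun h => absurd h hc, fun _ => Option.some_ne_none c⟩
  choose t ht using this
  exact ⟨t, fun z hz => (ht z).1 hz, fun c => (ht (some c)).2 (Option.some_ne_none c)⟩

variable [Finite X]

theorem periodicExtension_ne_none {t : Option X → Option X}
    (ht : ∀ z ∈ periodicPts (lift α), IsPeriodicPt (lift β) (minimalPeriod (lift α) z) (t z))
    (ht' : ∀ c, t (some c) ≠ none) (hx : ¬Dies α x) :
    periodicExtension (lift α) (lift β) t (some x) ≠ none := by
  obtain ⟨hz, i, hi⟩ := cyclePoint_mem (lift α) (some x)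
  cases hc : cyclePoint (lift α) (some x) with
  | none => rw [hc] at hi; exact absurd ⟨i, hi⟩ hx
  | some c =>
    rw [hc] at hz
    obtain ⟨b, hb⟩ := Option.ne_none_iff_exists'.1 (ht' c)
    have hbper : some b ∈ periodicPts (lift β) :=
      hb ▸ mk_mem_periodicPts (minimalPeriod_pos_of_mem_periodicPts hz) (ht _ hz)
    rw [periodicExtension, hc, hb]
    exact iterate_lift_ne_none hbper _

/-- A point whose orbit leaves `dom α` after `d` steps goes to the point `d` steps before the end
of a longest such orbit of `β`. -/
theorem exists_semiconj_on_dies (hd : maxDepth α ≤ maxDepth β) :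
    ∃ ρ : X → Option X, ∀ x ∈ pspan α, Dies α x → ρ x ≠ none ∧ (α x).bind ρ = lift β (ρ x) := by
  by_cases hex : ∃ x, α x ≠ none ∧ Dies α x
  · obtain ⟨x, hαx, hx⟩ := hex
    obtain ⟨x', hx'⟩ := Option.ne_none_iff_exists'.1 hαx
    have hpos : 0 < maxDepth β := by
      have := depth_le_maxDepth hx
      rw [depth_apply hx' ((dies_iff_of_apply hx').1 hx)] at this
      omega
    obtain ⟨y, hy, hdy⟩ := exists_depth_eq_maxDepth hpos
    refine ⟨fun x => (lift β)^[maxDepth β - depth α x] (some y), fun x _ hx => ⟨?_, ?_⟩⟩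
    · exact fun h => hy.iterate_depth.1 (iterate_lift_eq_none_of_le h (by omega))
    have hle := (depth_le_maxDepth hx).trans hd
    dsimp only
    cases hαx : α x with
    | none =>
      rw [depth_eq_zero hαx, Nat.sub_zero, ← iterate_succ_apply' (lift β), ← hdy,
        hy.iterate_depth.2]
      rfl
    | some x' =>
      rw [depth_apply hαx ((dies_iff_of_apply hαx).1 hx)] at hle ⊢
      rw [Option.bind_some, ← iterate_succ_apply' (lift β)]
      congr 2
      omega
  · refine ⟨fun _ => none, fun x hx hxd => absurd ?_ hex⟩
    rcases hx with hx | ⟨w, hw⟩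
    exacts [⟨x, hx, hxd⟩, ⟨w, by rw [hw]; simp, (dies_iff_of_apply hw).2 hxd⟩]

theorem exists_intertwines (hM : ∀ n ∈ Mset α, ∃ m ∈ Mset β, m ∣ n)
    (hd : maxDepth α ≤ maxDepth β) : ∃ φ, Intertwines α β φ := by
  obtain ⟨t, ht, ht'⟩ := exists_cycle_targets hM
  obtain ⟨ρ, hρ⟩ := exists_semiconj_on_dies hd
  have hsemi := semiconj_periodicExtension (lift α) (lift β) ht
  set κ := periodicExtension (lift α) (lift β) t
  -- `φ` must vanish off `pspan α`, since `β` may have no point outside `dom β`.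
  let φ : PT X := fun x => if x ∈ pspan α then if Dies α x then ρ x else κ (some x) else none
  have hspan : ∀ {x}, x ∈ pspan α → φ x = if Dies α x then ρ x else κ (some x) :=
    fun hx => if_pos hx
  refine ⟨φ, fun y hy => ?_, funext fun x => ?_⟩
  · change φ y ≠ none
    rw [hspan (Or.inr hy)]
    split_ifs with hyd
    exacts [(hρ y (Or.inr hy) hyd).1, periodicExtension_ne_none ht ht' hyd]
  change (α x).bind φ = lift β (φ x)
  by_cases hx : x ∈ pspan α
  · rw [hspan hx]
    cases hαx : α x with
    | none =>
      have hxd : Dies α x := ⟨1, hαx⟩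
      rw [if_pos hxd, ← (hρ x hx hxd).2, hαx]
      rfl
    | some x' =>
      have hx' : x' ∈ pspan α := Or.inr ⟨x, hαx⟩
      rw [Option.bind_some, hspan hx']
      by_cases hxd : Dies α x
      · rw [if_pos hxd, if_pos ((dies_iff_of_apply hαx).1 hxd), ← (hρ x hx hxd).2, hαx]
        rfl
      · rw [if_neg hxd, if_neg (mt (dies_iff_of_apply hαx).2 hxd), ← hsemi (some x), lift_some,
          hαx]
  · have hαx : α x = none := not_not.1 fun hαx => hx (Or.inl hαx)
    have hφx : φ x = none := if_neg hx
    rw [hαx, hφx]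
    rfl

theorem exists_intertwines_iff : (∃ φ, Intertwines α β φ) ↔
    (∀ n ∈ Mset α, ∃ m ∈ Mset β, m ∣ n) ∧ maxDepth α ≤ maxDepth β :=
  ⟨fun ⟨_, h⟩ => ⟨fun _ => h.exists_dvd, h.maxDepth_le⟩, fun ⟨hM, hd⟩ => exists_intertwines hM hd⟩

end PartialMaps

theorem conjP_iff_cs_and_s_general [Finite X] (α β : PT X) :
    ConjP α β ↔ cs α = cs β ∧ sVal α = sVal β := by
  rw [conjP_iff_intertwines, exists_intertwines_iff, exists_intertwines_iff, cs_eq_cs_iff,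
    sVal_eq_maxDepth, sVal_eq_maxDepth, Nat.cast_inj, le_antisymm_iff]
  tauto

/-- Corollary 5.6. For a finite nonempty set `X` and `α, β ∈ P(X)`:
`α ~c β` iff `cs(α) = cs(β)` and `s(α) = s(β)`. -/
theorem conjP_iff_cs_and_s [Finite X] [Nonempty X] (α β : PT X) :
    ConjP α β ↔ cs α = cs β ∧ sVal α = sVal β :=
  conjP_iff_cs_and_s_general α β

end ConjPaper
end
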